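/- Let A ∈ ℝ^{m×n} have all rows nonzero, let b ∈ range(A), and let ε ∈ ℝᵐ. Let {x_k} be the RK iterates for the noisy system Ax ≈ b + ε (i.e., the RK update uses the rows of A and the right-hand side b̃ = b + ε) with initial point x_0 ∈ range(Aᵀ), and let x_LS = A†b. Then for every k ≥ 0: 𝔼‖x_k − x_LS‖² ≤ (1 − σ_min²/‖A‖_F²)^k ‖x_0 − x_LS‖² + ‖ε‖²/σ_min², where σ_min is the smallest nonzero singular value of A. -/

import Mathlib

open Matrix

noncomputable section

namespace RK

/-- The Euclidean inner product on `Fin n → ℝ`. -/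
def dot {n : ℕ} (v w : Fin n → ℝ) : ℝ := ∑ i, v i * w i

/-- The squared Euclidean norm on `Fin n → ℝ`. -/
def normSq {n : ℕ} (v : Fin n → ℝ) : ℝ := ∑ i, v i ^ 2

/-- The Euclidean norm on `Fin n → ℝ`. -/
def euclNorm {n : ℕ} (v : Fin n → ℝ) : ℝ := Real.sqrt (normSq v)

/-- The squared Frobenius norm of a matrix. -/
def frobSq {m n : ℕ} (A : Matrix (Fin m) (Fin n) ℝ) : ℝ := ∑ i, ∑ j, A i j ^ 2

/-- One step of the (randomized) Kaczmarz method for the system `A x ≈ b`, using row `i`: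
`x ↦ x - ((aᵢᵀ x - bᵢ) / ‖aᵢ‖²) aᵢ`. -/
def rkStep {m n : ℕ} (A : Matrix (Fin m) (Fin n) ℝ) (b : Fin m → ℝ) (i : Fin m)
    (x : Fin n → ℝ) : Fin n → ℝ :=
  x - ((dot (A i) x - b i) / normSq (A i)) • A i

/-- `rkExp A b x0 k f` is the expectation `𝔼 f(x_k)` of `f` evaluated at the `k`-th iterate of the
randomized Kaczmarz algorithm applied to `A x ≈ b` started at `x0`, where at each step the row
index `i` is drawn independently at random with probability `‖aᵢ‖² / ‖A‖_F²`. -/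
def rkExp {m n : ℕ} (A : Matrix (Fin m) (Fin n) ℝ) (b : Fin m → ℝ) (x0 : Fin n → ℝ) :
    ℕ → ((Fin n → ℝ) → ℝ) → ℝ
  | 0, f => f x0
  | k + 1, f => rkExp A b x0 k fun x => ∑ i, normSq (A i) / frobSq A * f (rkStep A b i x)

/-- The four Penrose conditions: `B` is the Moore–Penrose pseudoinverse of `A`. -/
def IsMoorePenrose {m n : ℕ} (A : Matrix (Fin m) (Fin n) ℝ)
    (B : Matrix (Fin n) (Fin m) ℝ) : Prop :=
  A * B * A = A ∧ B * A * B = B ∧ (A * B)ᵀ = A * B ∧ (B * A)ᵀ = B * A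

/-- The row space `range(Aᵀ)` of a matrix `A`. -/
def rowSpace {m n : ℕ} (A : Matrix (Fin m) (Fin n) ℝ) : Set (Fin n → ℝ) :=
  {v | ∃ u : Fin m → ℝ, v = Aᵀ.mulVec u}

/-- The null space (kernel) of a matrix `A`. -/
def nullSpace {m n : ℕ} (A : Matrix (Fin m) (Fin n) ℝ) : Set (Fin n → ℝ) :=
  {v | A.mulVec v = 0}

/-- `σ` is the smallest nonzero singular value of `A`: `σ > 0`, `σ²` is an eigenvalue of `AᵀA`,
and `σ²` is less than or equal to every nonzero eigenvalue of `AᵀA`. -/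
def IsSmallestNonzeroSingularValue {m n : ℕ} (A : Matrix (Fin m) (Fin n) ℝ) (σ : ℝ) : Prop :=
  0 < σ ∧ (∃ v : Fin n → ℝ, v ≠ 0 ∧ (Aᵀ * A).mulVec v = σ ^ 2 • v) ∧
    ∀ μ : ℝ, μ ≠ 0 → (∃ v : Fin n → ℝ, v ≠ 0 ∧ (Aᵀ * A).mulVec v = μ • v) → σ ^ 2 ≤ μ

/-!
Write `e = x - x_LS`. Since `b ∈ range(A)`, the Penrose conditions give `A x_LS = b` and
`x_LS ∈ range(Aᵀ)`, so the Kaczmarz step along row `aᵢ` maps `e` to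
`e - ((aᵢᵀe - εᵢ)/‖aᵢ‖²) aᵢ`, whose squared norm is `‖e‖² - ((aᵢᵀe)² - εᵢ²)/‖aᵢ‖²`.
Averaging with weights `‖aᵢ‖²/‖A‖_F²` gives `𝔼‖e'‖² ≤ ‖e‖² - (‖Ae‖² - ‖ε‖²)/‖A‖_F²`.
Every step moves along a row of `A`, so `e` stays in `range(Aᵀ)`; there `‖Ae‖² ≥ σ_min² ‖e‖²`,
by expanding `e` in an orthonormal eigenbasis of `AᵀA` (its components along the kernel vanish).
Hence `𝔼‖e_{k+1}‖² ≤ r 𝔼‖e_k‖² + ‖ε‖²/‖A‖_F²` with `r = 1 - σ_min²/‖A‖_F² ∈ [0, 1)`, and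
unrolling this recursion bounds the noise contribution by `(‖ε‖²/‖A‖_F²)/(1 - r) = ‖ε‖²/σ_min²`.
-/

theorem _root_.Matrix.IsHermitian.mul_dotProduct_self_le {ι : Type*} [Fintype ι] [DecidableEq ι]
    {M : Matrix ι ι ℝ} (hM : M.IsHermitian) {c : ℝ}
    (hc : ∀ μ : ℝ, μ ≠ 0 → (∃ w : ι → ℝ, w ≠ 0 ∧ M *ᵥ w = μ • w) → c ≤ μ)
    {v : ι → ℝ} (hv : ∀ w, M *ᵥ w = 0 → w ⬝ᵥ v = 0) :
    c * (v ⬝ᵥ v) ≤ v ⬝ᵥ (M *ᵥ v) := by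
  set u : ι → ι → ℝ := fun j => ⇑(hM.eigenvectorBasis j)
  have parseval (x y : ι → ℝ) : x ⬝ᵥ y = ∑ j, (x ⬝ᵥ u j) * (u j ⬝ᵥ y) := by
    simpa [u, EuclideanSpace.inner_eq_star_dotProduct, dotProduct_comm] using
      (hM.eigenvectorBasis.sum_inner_mul_inner (WithLp.toLp 2 x) (WithLp.toLp 2 y)).symm
  have hMu (j : ι) : M *ᵥ u j = hM.eigenvalues j • u j := hM.mulVec_eigenvectorBasis j
  have hMv (j : ι) : u j ⬝ᵥ (M *ᵥ v) = hM.eigenvalues j * (u j ⬝ᵥ v) := by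
    rw [dotProduct_mulVec, ← mulVec_transpose, ← conjTranspose_eq_transpose_of_trivial, hM.eq,
      hMu, smul_dotProduct, smul_eq_mul]
  rw [parseval v v, parseval v (M *ᵥ v), Finset.mul_sum]
  refine Finset.sum_le_sum fun j _ => ?_
  rw [hMv, dotProduct_comm v]
  rcases eq_or_ne (hM.eigenvalues j) 0 with h0 | h0
  · have : u j ⬝ᵥ v = 0 := hv _ (by rw [hMu, h0, zero_smul])
    simp [this]
  · have hu : u j ≠ 0 := fun h =>
      hM.eigenvectorBasis.orthonormal.ne_zero j (by ext i; exact congrFun h i)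
    nlinarith [hc _ h0 ⟨u j, hu, hMu j⟩, mul_self_nonneg (u j ⬝ᵥ v)]

section

variable {m n : ℕ}

lemma normSq_eq_dotProduct (v : Fin n → ℝ) : normSq v = v ⬝ᵥ v := by
  simp [normSq, dotProduct, sq]

lemma normSq_nonneg (v : Fin n → ℝ) : 0 ≤ normSq v :=
  Finset.sum_nonneg fun _ _ => sq_nonneg _

lemma normSq_eq_zero_iff {v : Fin n → ℝ} : normSq v = 0 ↔ v = 0 := by
  rw [normSq_eq_dotProduct, dotProduct_self_eq_zero]

lemma normSq_pos {v : Fin n → ℝ} (hv : v ≠ 0) : 0 < normSq v :=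
  (normSq_nonneg v).lt_of_ne' (normSq_eq_zero_iff.not.mpr hv)

lemma frobSq_eq_sum_normSq (A : Matrix (Fin m) (Fin n) ℝ) : frobSq A = ∑ i, normSq (A i) := rfl

lemma frobSq_nonneg (A : Matrix (Fin m) (Fin n) ℝ) : 0 ≤ frobSq A :=
  Finset.sum_nonneg fun i _ => normSq_nonneg (A i)

lemma normSq_mulVec (A : Matrix (Fin m) (Fin n) ℝ) (v : Fin n → ℝ) :
    normSq (A *ᵥ v) = v ⬝ᵥ ((Aᵀ * A) *ᵥ v) := by
  rw [normSq_eq_dotProduct, ← mulVec_mulVec, dotProduct_mulVec v, vecMul_transpose]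

lemma normSq_mulVec_le (A : Matrix (Fin m) (Fin n) ℝ) (v : Fin n → ℝ) :
    normSq (A *ᵥ v) ≤ frobSq A * normSq v := by
  rw [frobSq_eq_sum_normSq, Finset.sum_mul]
  refine Finset.sum_le_sum fun i _ => ?_
  simpa [normSq, mulVec, dotProduct, sq] using Finset.sum_mul_sq_le_sq_mul_sq Finset.univ (A i) v

lemma rowSpace_eq_range (A : Matrix (Fin m) (Fin n) ℝ) :
    rowSpace A = LinearMap.range Aᵀ.mulVecLin := by
  ext v
  exact ⟨fun ⟨u, hu⟩ => ⟨u, hu.symm⟩, fun ⟨u, hu⟩ => ⟨u, hu.symm⟩⟩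

lemma row_mem_rowSpace (A : Matrix (Fin m) (Fin n) ℝ) (i : Fin m) : A i ∈ rowSpace A :=
  ⟨Pi.single i 1, by rw [mulVec_single_one]; rfl⟩

lemma IsMoorePenrose.mulVec_mulVec_mulVec {A : Matrix (Fin m) (Fin n) ℝ}
    {B : Matrix (Fin n) (Fin m) ℝ} (h : IsMoorePenrose A B) (x : Fin n → ℝ) :
    A *ᵥ (B *ᵥ (A *ᵥ x)) = A *ᵥ x := by
  rw [mulVec_mulVec, mulVec_mulVec, h.1]

lemma IsMoorePenrose.mulVec_mem_rowSpace {A : Matrix (Fin m) (Fin n) ℝ}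
    {B : Matrix (Fin n) (Fin m) ℝ} (h : IsMoorePenrose A B) (y : Fin m → ℝ) :
    B *ᵥ y ∈ rowSpace A := by
  refine ⟨Bᵀ *ᵥ (B *ᵥ y), ?_⟩
  conv_lhs => rw [← h.2.1, ← h.2.2.2, transpose_mul]
  simp only [mulVec_mulVec, Matrix.mul_assoc]

namespace IsSmallestNonzeroSingularValue

variable {A : Matrix (Fin m) (Fin n) ℝ} {σ : ℝ}

lemma mul_normSq_le (hσ : IsSmallestNonzeroSingularValue A σ) {v : Fin n → ℝ}
    (hv : v ∈ rowSpace A) : σ ^ 2 * normSq v ≤ normSq (A *ᵥ v) := by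
  have hM : (Aᵀ * A).IsHermitian := by
    simpa [conjTranspose_eq_transpose_of_trivial] using isHermitian_conjTranspose_mul_self A
  rw [normSq_mulVec, normSq_eq_dotProduct]
  refine hM.mul_dotProduct_self_le hσ.2.2 fun w hw => ?_
  have hAw : A *ᵥ w = 0 := normSq_eq_zero_iff.mp (by rw [normSq_mulVec, hw, dotProduct_zero])
  obtain ⟨u, rfl⟩ := hv
  rw [dotProduct_mulVec, vecMul_transpose, hAw, zero_dotProduct]

lemma sq_le_frobSq (hσ : IsSmallestNonzeroSingularValue A σ) : σ ^ 2 ≤ frobSq A := by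
  obtain ⟨v, hv0, hv⟩ := hσ.2.1
  have hAv : normSq (A *ᵥ v) = σ ^ 2 * normSq v := by
    rw [normSq_mulVec, hv, dotProduct_smul, smul_eq_mul, normSq_eq_dotProduct]
  exact le_of_mul_le_mul_right (hAv ▸ normSq_mulVec_le A v) (normSq_pos hv0)

lemma frobSq_pos (hσ : IsSmallestNonzeroSingularValue A σ) : 0 < frobSq A :=
  (pow_pos hσ.1 2).trans_le hσ.sq_le_frobSq

end IsSmallestNonzeroSingularValue

lemma normSq_sub_smul (u w : Fin n → ℝ) (q : ℝ) :
    normSq (u - q • w) = normSq u - 2 * q * (w ⬝ᵥ u) + q ^ 2 * normSq w := by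
  simp only [normSq_eq_dotProduct, sub_dotProduct, dotProduct_sub, smul_dotProduct,
    dotProduct_smul, smul_eq_mul, dotProduct_comm u w]
  ring

lemma normSq_mul_normSq_sub_smul_le (a e : Fin n → ℝ) (t : ℝ) :
    normSq a * normSq (e - ((a ⬝ᵥ e - t) / normSq a) • a) ≤
      normSq a * normSq e - ((a ⬝ᵥ e) ^ 2 - t ^ 2) := by
  rcases eq_or_ne a 0 with rfl | ha
  · -- the zero row leaves `e` fixed (`t / 0 = 0`), and the bound reads `0 ≤ t ^ 2`
    simp only [normSq_eq_dotProduct, zero_dotProduct]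
    nlinarith [sq_nonneg t]
  · have hα : normSq a ≠ 0 := normSq_eq_zero_iff.not.mpr ha
    refine le_of_eq ?_
    rw [normSq_sub_smul]
    field_simp
    ring

lemma rkStep_sub {A : Matrix (Fin m) (Fin n) ℝ} {b : Fin m → ℝ} {xs : Fin n → ℝ}
    (hxs : A *ᵥ xs = b) (ε : Fin m → ℝ) (i : Fin m) (x : Fin n → ℝ) :
    rkStep A (b + ε) i x - xs = (x - xs) - ((A i ⬝ᵥ (x - xs) - ε i) / normSq (A i)) • A i := by
  subst hxs
  have : dot (A i) x - (A *ᵥ xs + ε) i = A i ⬝ᵥ (x - xs) - ε i := by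
    rw [dotProduct_sub]
    simp only [dot, Pi.add_apply, mulVec, dotProduct]
    ring
  rw [rkStep, this, sub_right_comm]

lemma rkStep_sub_mem_rowSpace {A : Matrix (Fin m) (Fin n) ℝ} (b : Fin m → ℝ) (i : Fin m)
    {x xs : Fin n → ℝ} (hx : x - xs ∈ rowSpace A) : rkStep A b i x - xs ∈ rowSpace A := by
  have hrow := row_mem_rowSpace A i
  rw [rowSpace_eq_range] at hx hrow ⊢
  rw [rkStep, sub_right_comm]
  exact sub_mem hx (Submodule.smul_mem _ _ hrow)

/-- `𝔼[f(x_{k+1}) | x_k = x]`. -/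
def rkStepExp (A : Matrix (Fin m) (Fin n) ℝ) (b : Fin m → ℝ) (f : (Fin n → ℝ) → ℝ)
    (x : Fin n → ℝ) : ℝ :=
  ∑ i, normSq (A i) / frobSq A * f (rkStep A b i x)

lemma rkExp_succ (A : Matrix (Fin m) (Fin n) ℝ) (b : Fin m → ℝ) (x0 : Fin n → ℝ) (k : ℕ)
    (f : (Fin n → ℝ) → ℝ) : rkExp A b x0 (k + 1) f = rkExp A b x0 k (rkStepExp A b f) := rfl

section Iteration

variable {A : Matrix (Fin m) (Fin n) ℝ} {b : Fin m → ℝ} {x0 : Fin n → ℝ}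
  {S : Set (Fin n → ℝ)} {f g : (Fin n → ℝ) → ℝ}

lemma rkStepExp_le_rkStepExp (hS : ∀ i, Set.MapsTo (rkStep A b i) S S)
    (hfg : ∀ x ∈ S, f x ≤ g x) {x : Fin n → ℝ} (hx : x ∈ S) :
    rkStepExp A b f x ≤ rkStepExp A b g x :=
  Finset.sum_le_sum fun i _ => mul_le_mul_of_nonneg_left (hfg _ (hS i hx))
    (div_nonneg (normSq_nonneg _) (frobSq_nonneg A))

lemma rkExp_le_rkExp (hS : ∀ i, Set.MapsTo (rkStep A b i) S S) (hx0 : x0 ∈ S) (k : ℕ)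
    (hfg : ∀ x ∈ S, f x ≤ g x) : rkExp A b x0 k f ≤ rkExp A b x0 k g := by
  induction k generalizing f g with
  | zero => exact hfg x0 hx0
  | succ k ih => exact ih fun x hx => rkStepExp_le_rkStepExp hS hfg hx

lemma rkStepExp_affine (hF : 0 < frobSq A) (r d : ℝ) :
    rkStepExp A b (fun x => r * f x + d) = fun x => r * rkStepExp A b f x + d := by
  have hprob : ∑ i, normSq (A i) / frobSq A = 1 := by
    rw [← Finset.sum_div, ← frobSq_eq_sum_normSq, div_self hF.ne']
  funext x
  simp only [rkStepExp, mul_add, Finset.sum_add_distrib, ← Finset.sum_mul, hprob, one_mul,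
    Finset.mul_sum]
  exact congrArg (· + d) (Finset.sum_congr rfl fun i _ => by ring)

lemma rkExp_affine (hF : 0 < frobSq A) (k : ℕ) (r d : ℝ) :
    rkExp A b x0 k (fun x => r * f x + d) = r * rkExp A b x0 k f + d := by
  induction k generalizing f with
  | zero => rfl
  | succ k ih => rw [rkExp_succ, rkStepExp_affine hF, ih, rkExp_succ]

lemma rkExp_le_of_rkStepExp_le (hF : 0 < frobSq A) (hS : ∀ i, Set.MapsTo (rkStep A b i) S S)
    (hx0 : x0 ∈ S) {r d : ℝ} (hr0 : 0 ≤ r) (hr1 : r < 1) (hd : 0 ≤ d)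
    (hstep : ∀ x ∈ S, rkStepExp A b f x ≤ r * f x + d) (k : ℕ) :
    rkExp A b x0 k f ≤ r ^ k * f x0 + d / (1 - r) := by
  have h1r : 0 < 1 - r := sub_pos.mpr hr1
  induction k with
  | zero =>
    rw [pow_zero, one_mul]
    exact le_add_of_nonneg_right (div_nonneg hd h1r.le)
  | succ k ih =>
    calc rkExp A b x0 (k + 1) f ≤ rkExp A b x0 k (fun x => r * f x + d) :=
          rkExp_le_rkExp hS hx0 k hstep
      _ = r * rkExp A b x0 k f + d := rkExp_affine hF k r d
      _ ≤ r * (r ^ k * f x0 + d / (1 - r)) + d := by gcongr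
      _ = r ^ (k + 1) * f x0 + d / (1 - r) := by field_simp; ring

end Iteration

section NoisyStep

variable {A : Matrix (Fin m) (Fin n) ℝ} {b : Fin m → ℝ} {xs : Fin n → ℝ}

lemma rkStepExp_normSq_sub_le (hF : 0 < frobSq A) (hxs : A *ᵥ xs = b) (ε : Fin m → ℝ)
    (x : Fin n → ℝ) :
    rkStepExp A (b + ε) (fun y => normSq (y - xs)) x ≤
      normSq (x - xs) - (normSq (A *ᵥ (x - xs)) - normSq ε) / frobSq A := by
  set e := x - xs
  calc rkStepExp A (b + ε) (fun y => normSq (y - xs)) x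
      = (∑ i, normSq (A i) * normSq (e - ((A i ⬝ᵥ e - ε i) / normSq (A i)) • A i)) /
          frobSq A := by
        rw [rkStepExp, Finset.sum_div]
        exact Finset.sum_congr rfl fun i _ => by rw [rkStep_sub hxs]; ring
    _ ≤ (∑ i, (normSq (A i) * normSq e - ((A i ⬝ᵥ e) ^ 2 - ε i ^ 2))) / frobSq A := by
        gcongr with i
        exact normSq_mul_normSq_sub_smul_le (A i) e (ε i)
    _ = normSq e - (normSq (A *ᵥ e) - normSq ε) / frobSq A := by
        have hAe : normSq (A *ᵥ e) = ∑ i, (A i ⬝ᵥ e) ^ 2 := rfl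
        have hε : normSq ε = ∑ i, ε i ^ 2 := rfl
        rw [Finset.sum_sub_distrib, ← Finset.sum_mul, ← frobSq_eq_sum_normSq,
          Finset.sum_sub_distrib, hAe, hε]
        field_simp

lemma rkStepExp_normSq_sub_le_of_mem {σ : ℝ} (hσ : IsSmallestNonzeroSingularValue A σ)
    (hxs : A *ᵥ xs = b) (ε : Fin m → ℝ) {x : Fin n → ℝ} (hx : x - xs ∈ rowSpace A) :
    rkStepExp A (b + ε) (fun y => normSq (y - xs)) x ≤
      (1 - σ ^ 2 / frobSq A) * normSq (x - xs) + normSq ε / frobSq A := by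
  have hF := hσ.frobSq_pos
  have hstep := rkStepExp_normSq_sub_le hF hxs ε x
  have hcontract : σ ^ 2 * normSq (x - xs) / frobSq A ≤ normSq (A *ᵥ (x - xs)) / frobSq A :=
    div_le_div_of_nonneg_right (hσ.mul_normSq_le hx) hF.le
  have hexpand : (1 - σ ^ 2 / frobSq A) * normSq (x - xs) =
      normSq (x - xs) - σ ^ 2 * normSq (x - xs) / frobSq A := by ring
  rw [sub_div] at hstep
  linarith

end NoisyStep

end

theorem rk_zouzias_freris_general {m n : ℕ}
    (A : Matrix (Fin m) (Fin n) ℝ) (b : Fin m → ℝ)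
    (hcons : ∃ x, A.mulVec x = b)
    (eps : Fin m → ℝ)
    (Ap : Matrix (Fin n) (Fin m) ℝ) (hAp : IsMoorePenrose A Ap)
    (σmin : ℝ) (hσ : IsSmallestNonzeroSingularValue A σmin)
    (x0 : Fin n → ℝ) (hx0 : x0 ∈ rowSpace A)
    (k : ℕ) :
    rkExp A (b + eps) x0 k (fun y => normSq (y - Ap.mulVec b)) ≤
      (1 - σmin ^ 2 / frobSq A) ^ k * normSq (x0 - Ap.mulVec b)
        + normSq eps / σmin ^ 2 := by
  obtain ⟨x, rfl⟩ := hcons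
  set xs := Ap *ᵥ (A *ᵥ x)
  have hF := hσ.frobSq_pos
  have hσF : σmin ^ 2 / frobSq A ≤ 1 := (div_le_one hF).mpr hσ.sq_le_frobSq
  have hx0s : x0 - xs ∈ rowSpace A := by
    have hxs := hAp.mulVec_mem_rowSpace (A *ᵥ x)
    rw [rowSpace_eq_range] at hx0 hxs ⊢
    exact sub_mem hx0 hxs
  have h := rkExp_le_of_rkStepExp_le (S := {y | y - xs ∈ rowSpace A}) hF
    (fun i _ hy => rkStep_sub_mem_rowSpace _ i hy) hx0s (sub_nonneg.mpr hσF)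
    (sub_lt_self _ (by have := hσ.1; positivity)) (div_nonneg (normSq_nonneg eps) hF.le)
    (fun y hy => rkStepExp_normSq_sub_le_of_mem hσ (hAp.mulVec_mulVec_mulVec x) eps hy) k
  have hlimit : normSq eps / frobSq A / (1 - (1 - σmin ^ 2 / frobSq A)) =
      normSq eps / σmin ^ 2 := by
    have := hσ.1
    field_simp
    ring
  rwa [hlimit] at h

/-- **Theorem 1.2 (Zouzias–Freris).** For `b ∈ range(A)`, noise `ε`, RK applied to
`Ax ≈ b + ε` with `x₀ ∈ range(Aᵀ)`, and `x_LS = A†b`: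
`𝔼‖x_k − x_LS‖² ≤ (1 − σ_min²/‖A‖_F²)^k ‖x₀ − x_LS‖² + ‖ε‖²/σ_min²`. -/
theorem rk_zouzias_freris {m n : ℕ}
    (A : Matrix (Fin m) (Fin n) ℝ) (b : Fin m → ℝ)
    (hA : A ≠ 0) (hrows : ∀ i, A i ≠ 0)
    (hcons : ∃ x, A.mulVec x = b)
    (eps : Fin m → ℝ)
    (Ap : Matrix (Fin n) (Fin m) ℝ) (hAp : IsMoorePenrose A Ap)
    (σmin : ℝ) (hσ : IsSmallestNonzeroSingularValue A σmin)
    (x0 : Fin n → ℝ) (hx0 : x0 ∈ rowSpace A)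
    (k : ℕ) :
    rkExp A (b + eps) x0 k (fun y => normSq (y - Ap.mulVec b)) ≤
      (1 - σmin ^ 2 / frobSq A) ^ k * normSq (x0 - Ap.mulVec b)
        + normSq eps / σmin ^ 2 :=
  rk_zouzias_freris_general A b hcons eps Ap hAp σmin hσ x0 hx0 k

end RK
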